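/- Let ξ₁,...,ξₙ be independent centered random variables with ξᵢ ≤ B a.s. and satisfying condition (A) (with constants δ ∈ (0,1], B > 0). Let σ̄²(λ) denote the variance of S_n under the tilted measure P_λ, i.e. σ̄²(λ) = ∑ᵢ ( E[ξᵢ²e^{λξᵢ}]/E[e^{λξᵢ}] − (E[ξᵢe^{λξᵢ}])²/(E[e^{λξᵢ}])² ). Then for all λ ≥ 0, max(1 − 2Bλ, 0)·σ² ≤ σ̄²(λ) ≤ e^{Bλ}·σ², where σ² = ∑ᵢ E[ξᵢ²]. -/

import Mathlib

/-!
Write `v = E ξ²`, `E_λ = E e^{λξ}`, `a_λ = E ξ e^{λξ}`, `b_λ = E ξ² e^{λξ}`, so that the tilted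
variance of `ξ` is `b_λ / E_λ - a_λ² / E_λ²`, nonnegative by Cauchy–Schwarz. Since `E ξ = 0`,
Jensen gives `E_λ ≥ 1`, and `ξ ≤ B` gives `b_λ ≤ e^{Bλ} v`: this is the upper bound.

For the lower bound we may assume `x = Bλ ≤ 1/2` (otherwise the left side is `0`).
Lyapunov's inequality and the `(2+δ)`-moment bound give `v ≤ B²`; then Taylor's formula gives
`E_λ ≤ 1 + x²/2 + 2x³/9`, and convexity of `exp` gives `0 ≤ a_λ ≤ (e^x - 1) v / B`. Summing
over `i` and using condition (A) for `∑ b_λ`, the bound reduces to an elementary inequality in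
`x ∈ [0, 1/2]`.

The moment hypothesis only says something once `|ξ|^{2+δ}` is integrable (a Bochner integral of
a non-integrable function is `0`). That integrability also follows from condition (A): letting
`λ → 0⁺` in `(v - b_λ)/λ ≤ C`, Fatou's lemma shows that `ξ²(B - ξ)`, hence `ξ³`, is integrable.
-/

open MeasureTheory ProbabilityTheory Real Filter Topology

namespace Real

lemma exp_le_one_add_add_sq_div_two_of_nonpos {y : ℝ} (hy : y ≤ 0) :
    exp y ≤ 1 + y + y ^ 2 / 2 := by
  have hderiv : ∀ x, HasDerivAt (fun x => 1 + x + x ^ 2 / 2 - exp x) (1 + x - exp x) x := by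
    intro x
    exact ((((hasDerivAt_id' x).const_add 1).add ((hasDerivAt_pow 2 x).div_const 2)).sub
      (hasDerivAt_exp x)).congr_deriv (by norm_num)
  have hanti : Antitone (fun x => 1 + x + x ^ 2 / 2 - exp x) :=
    antitone_of_deriv_nonpos (fun x => (hderiv x).differentiableAt) fun x => by
      rw [(hderiv x).deriv]
      linarith [add_one_le_exp x]
  have := hanti hy
  simp only [exp_zero] at this
  linarith

lemma exp_le_one_add_add_sq_div_two_add_cube {y : ℝ} (h0 : 0 ≤ y) (h1 : y ≤ 1) :
    exp y ≤ 1 + y + y ^ 2 / 2 + 2 / 9 * y ^ 3 := by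
  have := exp_bound' h0 h1 (n := 3) (by norm_num)
  norm_num [Finset.sum_range_succ, Nat.factorial] at this
  linarith

lemma exp_le_one_add_add_mul_sq {y c : ℝ} (hyc : y ≤ c) (hc0 : 0 ≤ c) (hc1 : c ≤ 1) :
    exp y ≤ 1 + y + (1 / 2 + 2 / 9 * c) * y ^ 2 := by
  rcases le_total y 0 with hy | hy
  · nlinarith [exp_le_one_add_add_sq_div_two_of_nonpos hy, sq_nonneg y]
  · nlinarith [exp_le_one_add_add_sq_div_two_add_cube hy (hyc.trans hc1), sq_nonneg y]

lemma exp_sub_one_le_mul_exp {r : ℝ} : exp r - 1 ≤ r * exp r := by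
  nlinarith [add_one_le_exp (-r), exp_pos r, exp_neg r, mul_inv_cancel₀ (exp_pos r).ne']

end Real

lemma mul_exp_mul_sub_one_le {t B l : ℝ} (hB : 0 < B) (ht : t ≤ B) :
    t * (exp (l * t) - 1) ≤ (exp (B * l) - 1) / B * t ^ 2 := by
  rw [mul_comm B l]
  rcases le_or_gt t 0 with h | h
  · have hslope : l ≤ (exp (l * B) - 1) / B := by
      rw [le_div_iff₀ hB]
      linarith [add_one_le_exp (l * B)]
    nlinarith [add_one_le_exp (l * t), sq_nonneg t]
  · have hconv := convexOn_exp.2 (Set.mem_univ 0) (Set.mem_univ (l * B))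
      (sub_nonneg.2 ((div_le_one hB).2 ht)) (div_nonneg h.le hB.le) (by ring)
    simp only [smul_eq_mul, mul_zero, zero_add, exp_zero, mul_one] at hconv
    rw [show t / B * (l * B) = l * t by field_simp] at hconv
    calc t * (exp (l * t) - 1) ≤ t * (t / B * (exp (l * B) - 1)) := by gcongr; linarith
      _ = (exp (l * B) - 1) / B * t ^ 2 := by ring

lemma sq_mul_exp_mul_sub_one_le {t B l : ℝ} (hB : 0 ≤ B) (hl : 0 ≤ l) (ht : t ≤ B) :
    t ^ 2 * (exp (l * t) - 1) ≤ l * (B * exp (B * l)) * t ^ 2 := by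
  rcases le_or_gt t 0 with h | h
  · have : exp (l * t) ≤ 1 := exp_le_one_iff.2 (mul_nonpos_of_nonneg_of_nonpos hl h)
    have : t ^ 2 * (exp (l * t) - 1) ≤ 0 :=
      mul_nonpos_of_nonneg_of_nonpos (sq_nonneg t) (by linarith)
    have : 0 ≤ l * (B * exp (B * l)) * t ^ 2 := by positivity
    linarith
  · have h1 : exp (l * t) - 1 ≤ l * t * exp (l * t) := exp_sub_one_le_mul_exp
    have h2 : l * t * exp (l * t) ≤ l * B * exp (B * l) :=
      mul_le_mul (mul_le_mul_of_nonneg_left ht hl) (exp_le_exp.2 (by nlinarith)) (exp_pos _).le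
        (mul_nonneg hl hB)
    nlinarith [sq_nonneg t]

lemma one_sub_two_mul_le_of_le_half {x : ℝ} (h0 : 0 ≤ x) (h1 : x ≤ 1 / 2) :
    1 - 2 * x ≤ (1 - x) / (1 + x ^ 2 / 2 + 2 / 9 * x ^ 3) - (exp x - 1) ^ 2 := by
  set p := x ^ 2 / 2 + 2 / 9 * x ^ 3 with hp
  have hp0 : 0 ≤ p := by positivity
  have hexp : exp x - 1 ≤ x + p := by
    linarith [exp_le_one_add_add_sq_div_two_add_cube h0 (by linarith)]
  have hsq : (exp x - 1) ^ 2 ≤ (x + p) ^ 2 :=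
    pow_le_pow_left₀ (by linarith [add_one_le_exp x]) hexp 2
  have hpoly : (1 - 2 * x + (x + p) ^ 2) * (1 + p) ≤ 1 - x := by
    have h1' : 0 ≤ 1 / 2 - x := sub_nonneg.2 h1
    rw [hp]
    nlinarith [pow_nonneg h0 3, pow_nonneg h0 4, pow_nonneg h0 5, pow_nonneg h0 6,
      mul_nonneg (pow_nonneg h0 2) h1', mul_nonneg (pow_nonneg h0 3) h1',
      mul_nonneg (pow_nonneg h0 4) h1', mul_nonneg (pow_nonneg h0 5) h1',
      mul_nonneg (pow_nonneg h0 6) h1', mul_nonneg (pow_nonneg h0 7) h1']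
  have : 1 - 2 * x + (x + p) ^ 2 ≤ (1 - x) / (1 + p) := by
    rw [le_div_iff₀ (by positivity)]; exact hpoly
  rw [show 1 + x ^ 2 / 2 + 2 / 9 * x ^ 3 = 1 + p by ring]
  linarith

section Integrals

variable {α : Type*} [MeasurableSpace α] {μ : Measure α}

theorem integrable_of_tendsto_of_integral_le {ι : Type*} {u : Filter ι}
    [u.IsCountablyGenerated] [u.NeBot] {f : ι → α → ℝ} {g : α → ℝ} {C : ℝ}
    (hf_meas : ∀ i, AEStronglyMeasurable (f i) μ)
    (hf : ∀ᶠ i in u, Integrable (f i) μ ∧ 0 ≤ᵐ[μ] f i ∧ ∫ a, f i a ∂μ ≤ C)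
    (hlim : ∀ᵐ a ∂μ, Tendsto (fun i => f i a) u (𝓝 (g a))) : Integrable g μ := by
  refine ⟨aestronglyMeasurable_of_tendsto_ae u hf_meas hlim, ?_⟩
  calc ∫⁻ a, ‖g a‖ₑ ∂μ = ∫⁻ a, liminf (fun i => ‖f i a‖ₑ) u ∂μ :=
        lintegral_congr_ae (by filter_upwards [hlim] with a ha using ha.enorm.liminf_eq.symm)
    _ ≤ liminf (fun i => ∫⁻ a, ‖f i a‖ₑ ∂μ) u :=
        lintegral_liminf_le' fun i => (hf_meas i).aemeasurable.enorm
    _ ≤ ENNReal.ofReal C := by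
        refine liminf_le_of_frequently_le' (hf.mono fun i ⟨hint, hnn, hC⟩ => ?_).frequently
        rw [← ofReal_integral_norm_eq_lintegral_enorm hint,
          integral_congr_ae (hnn.mono fun a ha => Real.norm_of_nonneg ha)]
        exact ENNReal.ofReal_le_ofReal hC
    _ < ⊤ := ENNReal.ofReal_lt_top

theorem sq_integral_mul_le_integral_sq_mul_mul_integral {f w : α → ℝ} (hw : 0 ≤ᵐ[μ] w)
    (hwi : Integrable w μ) (hfw : Integrable (fun a => f a * w a) μ)
    (hffw : Integrable (fun a => f a ^ 2 * w a) μ) :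
    (∫ a, f a * w a ∂μ) ^ 2 ≤ (∫ a, f a ^ 2 * w a ∂μ) * ∫ a, w a ∂μ := by
  have hquad : ∀ c : ℝ, 0 ≤ (∫ a, w a ∂μ) * (c * c) + (-2 * ∫ a, f a * w a ∂μ) * c
      + ∫ a, f a ^ 2 * w a ∂μ := by
    intro c
    have hexpand : ∫ a, (f a - c) ^ 2 * w a ∂μ = (∫ a, w a ∂μ) * (c * c)
        + (-2 * ∫ a, f a * w a ∂μ) * c + ∫ a, f a ^ 2 * w a ∂μ := by
      have : (fun a => (f a - c) ^ 2 * w a)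
          = fun a => (f a ^ 2 * w a - 2 * c * (f a * w a)) + c ^ 2 * w a := by
        ext a; ring
      have hsub : Integrable (fun a => f a ^ 2 * w a - 2 * c * (f a * w a)) μ :=
        hffw.sub (hfw.const_mul _)
      rw [this, integral_add hsub (hwi.const_mul _),
        integral_sub hffw (hfw.const_mul _), integral_const_mul, integral_const_mul]
      ring
    rw [← hexpand]
    exact integral_nonneg_of_ae (hw.mono fun a ha => mul_nonneg (sq_nonneg _) ha)
  have := discrim_le_zero hquad
  rw [discrim] at this
  linarith

end Integrals

section Tilted

variable {Ω : Type*} [MeasurableSpace Ω] {μ : Measure Ω} {X : Ω → ℝ} {B l : ℝ}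

variable (μ X l) in
noncomputable def tiltedVariance : ℝ :=
  (∫ ω, X ω ^ 2 * exp (l * X ω) ∂μ) / (∫ ω, exp (l * X ω) ∂μ)
    - (∫ ω, X ω * exp (l * X ω) ∂μ) ^ 2 / (∫ ω, exp (l * X ω) ∂μ) ^ 2

theorem tiltedVariance_nonneg (he : Integrable (fun ω => exp (l * X ω)) μ)
    (hxe : Integrable (fun ω => X ω * exp (l * X ω)) μ)
    (hx2e : Integrable (fun ω => X ω ^ 2 * exp (l * X ω)) μ) :
    0 ≤ tiltedVariance μ X l := by
  have hCS := sq_integral_mul_le_integral_sq_mul_mul_integral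
    (ae_of_all μ fun ω => (exp_pos (l * X ω)).le) he hxe hx2e
  rw [tiltedVariance, sub_nonneg]
  rcases (integral_nonneg fun ω => (exp_pos (l * X ω)).le : 0 ≤ ∫ ω, exp (l * X ω) ∂μ).eq_or_lt
    with hE | hE
  · simp [← hE]
  · calc _ ≤ (∫ ω, X ω ^ 2 * exp (l * X ω) ∂μ) * (∫ ω, exp (l * X ω) ∂μ)
          / (∫ ω, exp (l * X ω) ∂μ) ^ 2 := by gcongr
      _ = _ := by rw [sq, mul_div_mul_right _ _ hE.ne']

theorem integral_sq_mul_exp_mul_le (hl : 0 ≤ l) (hXB : ∀ᵐ ω ∂μ, X ω ≤ B)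
    (h2 : Integrable (fun ω => X ω ^ 2) μ) :
    ∫ ω, X ω ^ 2 * exp (l * X ω) ∂μ ≤ exp (B * l) * ∫ ω, X ω ^ 2 ∂μ := by
  rw [← integral_const_mul]
  refine integral_mono_of_nonneg (ae_of_all μ fun ω => by positivity) (h2.const_mul _) ?_
  filter_upwards [hXB] with ω hω
  rw [mul_comm (exp (B * l))]
  exact mul_le_mul_of_nonneg_left (exp_le_exp.2 (by nlinarith)) (sq_nonneg _)

theorem integral_mul_exp_mul_eq (hX : Integrable X μ) (hmean : ∫ ω, X ω ∂μ = 0)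
    (hxe : Integrable (fun ω => X ω * exp (l * X ω)) μ) :
    ∫ ω, X ω * exp (l * X ω) ∂μ = ∫ ω, X ω * (exp (l * X ω) - 1) ∂μ := by
  simp_rw [mul_sub, mul_one]
  rw [integral_sub hxe hX, hmean, sub_zero]

theorem integral_mul_exp_mul_nonneg (hl : 0 ≤ l) (hX : Integrable X μ)
    (hmean : ∫ ω, X ω ∂μ = 0) (hxe : Integrable (fun ω => X ω * exp (l * X ω)) μ) :
    0 ≤ ∫ ω, X ω * exp (l * X ω) ∂μ := by
  rw [integral_mul_exp_mul_eq hX hmean hxe]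
  refine integral_nonneg fun ω => ?_
  rcases le_total (X ω) 0 with h | h
  · exact mul_nonneg_of_nonpos_of_nonpos h
      (sub_nonpos.2 (exp_le_one_iff.2 (mul_nonpos_of_nonneg_of_nonpos hl h)))
  · exact mul_nonneg h (sub_nonneg.2 (one_le_exp (mul_nonneg hl h)))

theorem integral_mul_exp_mul_le (hB : 0 < B) (hXB : ∀ᵐ ω ∂μ, X ω ≤ B) (hX : Integrable X μ)
    (hmean : ∫ ω, X ω ∂μ = 0) (hxe : Integrable (fun ω => X ω * exp (l * X ω)) μ)
    (h2 : Integrable (fun ω => X ω ^ 2) μ) :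
    ∫ ω, X ω * exp (l * X ω) ∂μ ≤ (exp (B * l) - 1) / B * ∫ ω, X ω ^ 2 ∂μ := by
  have hint : Integrable (fun ω => X ω * (exp (l * X ω) - 1)) μ := by
    simp_rw [mul_sub, mul_one]
    exact hxe.sub hX
  rw [integral_mul_exp_mul_eq hX hmean hxe, ← integral_const_mul]
  refine integral_mono_ae hint (h2.const_mul _) ?_
  filter_upwards [hXB] with ω hω
  exact mul_exp_mul_sub_one_le hB hω

variable [IsProbabilityMeasure μ]

theorem one_le_integral_exp_mul (hX : Integrable X μ) (hmean : ∫ ω, X ω ∂μ = 0)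
    (he : Integrable (fun ω => exp (l * X ω)) μ) : 1 ≤ ∫ ω, exp (l * X ω) ∂μ := by
  have hint : Integrable (fun ω => 1 + l * X ω) μ := (integrable_const 1).add (hX.const_mul l)
  have h := integral_mono hint he fun ω => by linarith [add_one_le_exp (l * X ω)]
  simpa [integral_add (integrable_const 1) (hX.const_mul l), integral_const_mul, hmean] using h

theorem integral_exp_mul_le (hB : 0 ≤ B) (hl : 0 ≤ l) (hBl : B * l ≤ 1)
    (hXB : ∀ᵐ ω ∂μ, X ω ≤ B) (hX : Integrable X μ) (hmean : ∫ ω, X ω ∂μ = 0)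
    (h2 : Integrable (fun ω => X ω ^ 2) μ) :
    ∫ ω, exp (l * X ω) ∂μ ≤ 1 + (1 / 2 + 2 / 9 * (B * l)) * l ^ 2 * ∫ ω, X ω ^ 2 ∂μ := by
  have hint : Integrable (fun ω => 1 + l * X ω) μ := (integrable_const 1).add (hX.const_mul l)
  have hint' : Integrable (fun ω => 1 + l * X ω + (1 / 2 + 2 / 9 * (B * l)) * l ^ 2 * X ω ^ 2) μ :=
    hint.add (h2.const_mul _)
  have h := integral_mono_of_nonneg (ae_of_all μ fun ω => (exp_pos (l * X ω)).le) hint' ?_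
  · simpa [integral_add hint (h2.const_mul _), integral_add (integrable_const 1) (hX.const_mul l),
      integral_const_mul, hmean] using h
  · filter_upwards [hXB] with ω hω
    have := exp_le_one_add_add_mul_sq (y := l * X ω) (by nlinarith) (by positivity) hBl
    linarith

theorem tiltedVariance_le (hl : 0 ≤ l) (hXB : ∀ᵐ ω ∂μ, X ω ≤ B) (hX : Integrable X μ)
    (hmean : ∫ ω, X ω ∂μ = 0) (he : Integrable (fun ω => exp (l * X ω)) μ)
    (h2 : Integrable (fun ω => X ω ^ 2) μ) :
    tiltedVariance μ X l ≤ exp (B * l) * ∫ ω, X ω ^ 2 ∂μ := by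
  have hE := one_le_integral_exp_mul hX hmean he
  have hb : 0 ≤ ∫ ω, X ω ^ 2 * exp (l * X ω) ∂μ := integral_nonneg fun ω => by positivity
  calc tiltedVariance μ X l ≤ (∫ ω, X ω ^ 2 * exp (l * X ω) ∂μ) / ∫ ω, exp (l * X ω) ∂μ :=
        sub_le_self _ (by positivity)
    _ ≤ ∫ ω, X ω ^ 2 * exp (l * X ω) ∂μ := div_le_self hb hE
    _ ≤ exp (B * l) * ∫ ω, X ω ^ 2 ∂μ := integral_sq_mul_exp_mul_le hl hXB h2

theorem le_tiltedVariance (hB : 0 < B) (hl : 0 ≤ l) (hBl : B * l ≤ 1)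
    (hXB : ∀ᵐ ω ∂μ, X ω ≤ B) (hX : Integrable X μ) (hmean : ∫ ω, X ω ∂μ = 0)
    (he : Integrable (fun ω => exp (l * X ω)) μ)
    (hxe : Integrable (fun ω => X ω * exp (l * X ω)) μ)
    (h2 : Integrable (fun ω => X ω ^ 2) μ) (hv : ∫ ω, X ω ^ 2 ∂μ ≤ B ^ 2) :
    (∫ ω, X ω ^ 2 * exp (l * X ω) ∂μ) / (1 + (B * l) ^ 2 / 2 + 2 / 9 * (B * l) ^ 3)
      - (exp (B * l) - 1) ^ 2 * ∫ ω, X ω ^ 2 ∂μ ≤ tiltedVariance μ X l := by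
  set E := ∫ ω, exp (l * X ω) ∂μ
  set a := ∫ ω, X ω * exp (l * X ω) ∂μ
  set v := ∫ ω, X ω ^ 2 ∂μ
  have hE : 1 ≤ E := one_le_integral_exp_mul hX hmean he
  have hv0 : 0 ≤ v := integral_nonneg fun ω => sq_nonneg _
  have hED : E ≤ 1 + (B * l) ^ 2 / 2 + 2 / 9 * (B * l) ^ 3 := by
    have := integral_exp_mul_le hB.le hl hBl hXB hX hmean h2
    have : (1 / 2 + 2 / 9 * (B * l)) * l ^ 2 * v ≤ (1 / 2 + 2 / 9 * (B * l)) * l ^ 2 * B ^ 2 := by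
      gcongr
    linarith
  have ha0 : 0 ≤ a := integral_mul_exp_mul_nonneg hl hX hmean hxe
  have ha : a ≤ (exp (B * l) - 1) / B * v := integral_mul_exp_mul_le hB hXB hX hmean hxe h2
  have hsq : a ^ 2 / E ^ 2 ≤ (exp (B * l) - 1) ^ 2 * v := by
    have hv' : v / B ^ 2 ≤ 1 := (div_le_one (by positivity)).2 hv
    calc a ^ 2 / E ^ 2 ≤ a ^ 2 := div_le_self (sq_nonneg a) (one_le_pow₀ hE)
      _ ≤ ((exp (B * l) - 1) / B * v) ^ 2 := pow_le_pow_left₀ ha0 ha 2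
      _ = (exp (B * l) - 1) ^ 2 * v * (v / B ^ 2) := by field_simp
      _ ≤ (exp (B * l) - 1) ^ 2 * v := mul_le_of_le_one_right (by positivity) hv'
  have hb : (∫ ω, X ω ^ 2 * exp (l * X ω) ∂μ) / (1 + (B * l) ^ 2 / 2 + 2 / 9 * (B * l) ^ 3)
      ≤ (∫ ω, X ω ^ 2 * exp (l * X ω) ∂μ) / E :=
    div_le_div_of_nonneg_left (integral_nonneg fun ω => by positivity) (by linarith) hED
  rw [tiltedVariance]
  linarith

end Tilted

section Moments

variable {Ω : Type*} [MeasurableSpace Ω] {μ : Measure Ω} {X : Ω → ℝ} {B : ℝ}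

lemma abs_rpow_le_sq_add_abs_pow_three {δ : ℝ} (hδ0 : 0 ≤ δ) (hδ1 : δ ≤ 1) (t : ℝ) :
    |t| ^ (2 + δ) ≤ t ^ 2 + |t ^ 3| := by
  rcases le_total |t| 1 with h | h
  · rcases (abs_nonneg t).eq_or_lt with h0 | h0
    · rw [← h0, zero_rpow (by positivity)]
      positivity
    · have := rpow_le_rpow_of_exponent_ge h0 h (by linarith : (2 : ℝ) ≤ 2 + δ)
      rw [rpow_two, sq_abs] at this
      linarith [abs_nonneg (t ^ 3)]
  · have := rpow_le_rpow_of_exponent_le h (by linarith : 2 + δ ≤ (3 : ℝ))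
    rw [show (3 : ℝ) = (3 : ℕ) by norm_num, rpow_natCast, ← abs_pow] at this
    linarith [sq_nonneg t]

theorem integrable_abs_rpow_of_integrable_pow_three {δ : ℝ} (hδ0 : 0 ≤ δ) (hδ1 : δ ≤ 1)
    (hX : AEStronglyMeasurable X μ) (h2 : Integrable (fun ω => X ω ^ 2) μ)
    (h3 : Integrable (fun ω => X ω ^ 3) μ) :
    Integrable (fun ω => |X ω| ^ (2 + δ)) μ := by
  refine (h2.add h3.abs).mono' ?_ (ae_of_all μ fun ω => ?_)
  · exact (continuous_abs.rpow_const fun _ => Or.inr (by linarith)).comp_aestronglyMeasurable hX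
  · rw [norm_of_nonneg (by positivity)]
    exact abs_rpow_le_sq_add_abs_pow_three hδ0 hδ1 (X ω)

theorem integral_sq_le_sq_of_integral_abs_rpow_le [IsProbabilityMeasure μ] {δ : ℝ} (hB : 0 ≤ B)
    (hδ : 0 ≤ δ) (h2 : Integrable (fun ω => X ω ^ 2) μ)
    (hr : Integrable (fun ω => |X ω| ^ (2 + δ)) μ)
    (hmom : ∫ ω, |X ω| ^ (2 + δ) ∂μ ≤ B ^ (2 + δ)) :
    ∫ ω, X ω ^ 2 ∂μ ≤ B ^ 2 := by
  have hp : 1 ≤ (2 + δ) / 2 := by linarith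
  have hpow : ∀ t : ℝ, (t ^ 2) ^ ((2 + δ) / 2) = |t| ^ (2 + δ) := fun t => by
    rw [← sq_abs, ← rpow_natCast, ← rpow_mul (abs_nonneg t)]
    congr 1
    ring
  have hJensen := (convexOn_rpow hp).map_integral_le
    (continuousOn_id.rpow_const fun _ _ => Or.inr (by linarith)) isClosed_Ici
    (ae_of_all μ fun ω => sq_nonneg (X ω)) h2 (by simpa [Function.comp_def, hpow] using hr)
  simp only [hpow] at hJensen
  rw [← abs_of_nonneg hB, ← hpow B] at hmom
  exact (rpow_le_rpow_iff (integral_nonneg fun ω => sq_nonneg _) (sq_nonneg B)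
    (by linarith)).1 (hJensen.trans hmom)

end Moments

section ConditionA

variable {Ω : Type*} [MeasurableSpace Ω] {μ : Measure Ω} {X : Ω → ℝ} {B C : ℝ}

lemma tendsto_inv_mul_sq_sub_sq_mul_exp_add (B t : ℝ) :
    Tendsto (fun l => l⁻¹ * (t ^ 2 - t ^ 2 * exp (l * t)) + B * exp (B * l) * t ^ 2)
      (𝓝[>] 0) (𝓝 (B * t ^ 2 - t ^ 3)) := by
  have hslope : Tendsto (fun l => l⁻¹ * (exp (l * t) - 1)) (𝓝[>] 0) (𝓝 t) := by
    simpa using ((hasDerivAt_id (0 : ℝ)).mul_const t).exp.tendsto_slope_zero_right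
  have hcont : Continuous fun l => B * exp (B * l) * t ^ 2 := by fun_prop
  convert (hslope.const_mul (-t ^ 2)).add
    ((hcont.tendsto 0).mono_left nhdsWithin_le_nhds) using 2
  · ring
  · simp only [mul_zero, exp_zero]; ring

theorem integrable_pow_three_of_integral_sq_sub_le (hB : 0 ≤ B) (hX : AEStronglyMeasurable X μ)
    (hXB : ∀ᵐ ω ∂μ, X ω ≤ B) (h2 : Integrable (fun ω => X ω ^ 2) μ)
    (h2e : ∀ l, 0 < l → Integrable (fun ω => X ω ^ 2 * exp (l * X ω)) μ)
    (hC : ∀ l, 0 < l → l ≤ 1 →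
      ∫ ω, X ω ^ 2 ∂μ - ∫ ω, X ω ^ 2 * exp (l * X ω) ∂μ ≤ C * l) :
    Integrable (fun ω => X ω ^ 3) μ := by
  -- the term `B e^{Bl} X²` makes `f l ≥ 0`, as Fatou's lemma needs; `f l → X²(B - X)` as `l → 0⁺`
  set f : ℝ → Ω → ℝ := fun l ω =>
    l⁻¹ * (X ω ^ 2 - X ω ^ 2 * exp (l * X ω)) + B * exp (B * l) * X ω ^ 2
  have hI : ∀ l, 0 < l → Integrable (fun ω => X ω ^ 2 - X ω ^ 2 * exp (l * X ω)) μ :=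
    fun l hl => h2.sub (h2e l hl)
  have hlimit : Integrable (fun ω => B * X ω ^ 2 - X ω ^ 3) μ := by
    refine integrable_of_tendsto_of_integral_le (u := 𝓝[>] 0) (f := f)
      (C := C + B * exp B * ∫ ω, X ω ^ 2 ∂μ) (fun l => by fun_prop) ?_
      (ae_of_all μ fun ω => tendsto_inv_mul_sq_sub_sq_mul_exp_add B (X ω))
    filter_upwards [Ioc_mem_nhdsGT (zero_lt_one' ℝ)] with l ⟨hl0, hl1⟩
    refine ⟨((hI l hl0).const_mul _).add (h2.const_mul _), ?_, ?_⟩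
    · filter_upwards [hXB] with ω hω
      have := sq_mul_exp_mul_sub_one_le hB hl0.le hω
      have : -(B * exp (B * l) * X ω ^ 2) ≤ l⁻¹ * (X ω ^ 2 - X ω ^ 2 * exp (l * X ω)) := by
        rw [le_inv_mul_iff₀ hl0]; linarith
      simp only [f, Pi.zero_apply]
      linarith
    · have hexp : B * exp (B * l) ≤ B * exp B :=
        mul_le_mul_of_nonneg_left (exp_le_exp.2 (by nlinarith)) hB
      have hdiff : l⁻¹ * (∫ ω, X ω ^ 2 ∂μ - ∫ ω, X ω ^ 2 * exp (l * X ω) ∂μ) ≤ C := by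
        rw [inv_mul_le_iff₀ hl0]; linarith [hC l hl0 hl1]
      have := mul_le_mul_of_nonneg_right hexp
        (integral_nonneg fun ω => sq_nonneg (X ω) : 0 ≤ ∫ ω, X ω ^ 2 ∂μ)
      rw [integral_add ((hI l hl0).const_mul _) (h2.const_mul _), integral_const_mul,
        integral_const_mul, integral_sub h2 (h2e l hl0)]
      linarith
  refine ((h2.const_mul B).sub hlimit).congr (ae_of_all μ fun ω => ?_)
  simp only [Pi.sub_apply]
  ring

end ConditionA

section Family

variable {Ω ι : Type*} [MeasurableSpace Ω] {μ : Measure Ω} [Fintype ι] {X : ι → Ω → ℝ} {B l : ℝ}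

theorem integral_sq_sub_integral_sq_mul_exp_le (hB : 0 ≤ B) (hl : 0 ≤ l)
    (hXB : ∀ i, ∀ᵐ ω ∂μ, X i ω ≤ B) (h2 : ∀ i, Integrable (fun ω => X i ω ^ 2) μ)
    (h2e : ∀ i, Integrable (fun ω => X i ω ^ 2 * exp (l * X i ω)) μ)
    (hA : (1 - B * l) * ∑ i, ∫ ω, X i ω ^ 2 ∂μ ≤ ∑ i, ∫ ω, X i ω ^ 2 * exp (l * X i ω) ∂μ)
    (i : ι) :
    ∫ ω, X i ω ^ 2 ∂μ - ∫ ω, X i ω ^ 2 * exp (l * X i ω) ∂μ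
      ≤ l * (B + B * exp (B * l)) * ∑ j, ∫ ω, X j ω ^ 2 ∂μ := by
  set K := l * (B * exp (B * l))
  have hgap : ∀ j, ∫ ω, X j ω ^ 2 * exp (l * X j ω) ∂μ - ∫ ω, X j ω ^ 2 ∂μ
      ≤ K * ∫ ω, X j ω ^ 2 ∂μ := fun j => by
    rw [← integral_sub (h2e j) (h2 j), ← integral_const_mul]
    refine integral_mono_ae ((h2e j).sub (h2 j)) ((h2 j).const_mul K) ?_
    filter_upwards [hXB j] with ω hω
    simpa [mul_sub] using sq_mul_exp_mul_sub_one_le hB hl hω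
  have hsingle := Finset.single_le_sum (f := fun j => ∫ ω, X j ω ^ 2 ∂μ
      - ∫ ω, X j ω ^ 2 * exp (l * X j ω) ∂μ + K * ∫ ω, X j ω ^ 2 ∂μ)
    (fun j _ => by linarith [hgap j]) (Finset.mem_univ i)
  simp only [Finset.sum_add_distrib, Finset.sum_sub_distrib, ← Finset.mul_sum] at hsingle
  have : 0 ≤ K * ∫ ω, X i ω ^ 2 ∂μ :=
    mul_nonneg (by positivity) (integral_nonneg fun ω => sq_nonneg _)
  linarith

theorem integrable_pow_three_of_sum_integral_sq_mul_exp_ge (hB : 0 ≤ B)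
    (hX : ∀ i, AEStronglyMeasurable (X i) μ) (hXB : ∀ i, ∀ᵐ ω ∂μ, X i ω ≤ B)
    (h2 : ∀ i, Integrable (fun ω => X i ω ^ 2) μ)
    (h2e : ∀ i, ∀ l : ℝ, 0 ≤ l → Integrable (fun ω => X i ω ^ 2 * exp (l * X i ω)) μ)
    (hA : ∀ l : ℝ, 0 ≤ l →
      (1 - B * l) * ∑ i, ∫ ω, X i ω ^ 2 ∂μ ≤ ∑ i, ∫ ω, X i ω ^ 2 * exp (l * X i ω) ∂μ)
    (i : ι) : Integrable (fun ω => X i ω ^ 3) μ := by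
  refine integrable_pow_three_of_integral_sq_sub_le hB (hX i) (hXB i) (h2 i)
    (fun l hl => h2e i l hl.le) (C := (B + B * exp B) * ∑ j, ∫ ω, X j ω ^ 2 ∂μ)
    fun l hl hl1 => (integral_sq_sub_integral_sq_mul_exp_le hB hl.le hXB h2
      (fun j => h2e j l hl.le) (hA l hl.le) i).trans ?_
  have hexp : B * exp (B * l) ≤ B * exp B :=
    mul_le_mul_of_nonneg_left (exp_le_exp.2 (by nlinarith)) hB
  have := mul_le_mul_of_nonneg_right hexp
    (mul_nonneg hl.le (Finset.sum_nonneg fun j _ => integral_nonneg fun ω => sq_nonneg (X j ω)) :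
      0 ≤ l * ∑ j, ∫ ω, X j ω ^ 2 ∂μ)
  linarith

theorem mul_sum_integral_sq_le_sum_tiltedVariance [IsProbabilityMeasure μ] (hB : 0 < B)
    (hl : 0 ≤ l) (hBl : B * l ≤ 1 / 2) (hXB : ∀ i, ∀ᵐ ω ∂μ, X i ω ≤ B)
    (hX : ∀ i, Integrable (X i) μ) (hmean : ∀ i, ∫ ω, X i ω ∂μ = 0)
    (he : ∀ i, Integrable (fun ω => exp (l * X i ω)) μ)
    (hxe : ∀ i, Integrable (fun ω => X i ω * exp (l * X i ω)) μ)
    (h2 : ∀ i, Integrable (fun ω => X i ω ^ 2) μ) (hv : ∀ i, ∫ ω, X i ω ^ 2 ∂μ ≤ B ^ 2)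
    (hA : (1 - B * l) * ∑ i, ∫ ω, X i ω ^ 2 ∂μ ≤ ∑ i, ∫ ω, X i ω ^ 2 * exp (l * X i ω) ∂μ) :
    (1 - 2 * B * l) * ∑ i, ∫ ω, X i ω ^ 2 ∂μ ≤ ∑ i, tiltedVariance μ (X i) l := by
  have hnum := one_sub_two_mul_le_of_le_half (mul_nonneg hB.le hl) hBl
  have hV : 0 ≤ ∑ i, ∫ ω, X i ω ^ 2 ∂μ :=
    Finset.sum_nonneg fun i _ => integral_nonneg fun ω => sq_nonneg _
  set x := B * l
  set D := 1 + x ^ 2 / 2 + 2 / 9 * x ^ 3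
  have hD : 0 < D := by positivity
  calc (1 - 2 * B * l) * ∑ i, ∫ ω, X i ω ^ 2 ∂μ
      ≤ ((1 - x) / D - (exp x - 1) ^ 2) * ∑ i, ∫ ω, X i ω ^ 2 ∂μ := by
        rw [mul_assoc]; exact mul_le_mul_of_nonneg_right hnum hV
    _ = (1 - x) * (∑ i, ∫ ω, X i ω ^ 2 ∂μ) / D - (exp x - 1) ^ 2 * ∑ i, ∫ ω, X i ω ^ 2 ∂μ := by
        ring
    _ ≤ (∑ i, ∫ ω, X i ω ^ 2 * exp (l * X i ω) ∂μ) / D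
          - (exp x - 1) ^ 2 * ∑ i, ∫ ω, X i ω ^ 2 ∂μ := by gcongr
    _ = ∑ i, ((∫ ω, X i ω ^ 2 * exp (l * X i ω) ∂μ) / D
          - (exp x - 1) ^ 2 * ∫ ω, X i ω ^ 2 ∂μ) := by
        rw [Finset.sum_sub_distrib, Finset.sum_div, Finset.mul_sum]
    _ ≤ ∑ i, tiltedVariance μ (X i) l := Finset.sum_le_sum fun i _ =>
        le_tiltedVariance hB hl (by linarith) (hXB i) (hX i) (hmean i) (he i) (hxe i) (h2 i) (hv i)

end Family

theorem tilted_variance_two_sided_bound_general {Ω : Type*} [MeasurableSpace Ω] (μ : Measure Ω)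
    [IsProbabilityMeasure μ] (n : ℕ) (ξ : Fin n → Ω → ℝ) (B δ : ℝ) (hB : 0 < B)
    (hδ : δ ∈ Set.Ioc (0 : ℝ) 1)
    (hint : ∀ i, Integrable (ξ i) μ) (hmean : ∀ i, ∫ ω, ξ i ω ∂μ = 0)
    (hbdd : ∀ i, ∀ᵐ ω ∂μ, ξ i ω ≤ B)
    (hmom : ∀ i, ∫ ω, |ξ i ω| ^ (2 + δ) ∂μ ≤ B ^ (2 + δ))
    (hint2 : ∀ i, Integrable (fun ω => (ξ i ω) ^ 2) μ)
    (hinte : ∀ i, ∀ l : ℝ, 0 ≤ l → Integrable (fun ω => Real.exp (l * ξ i ω)) μ)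
    (hintxe : ∀ i, ∀ l : ℝ, 0 ≤ l →
      Integrable (fun ω => ξ i ω * Real.exp (l * ξ i ω)) μ)
    (hintx2e : ∀ i, ∀ l : ℝ, 0 ≤ l →
      Integrable (fun ω => (ξ i ω) ^ 2 * Real.exp (l * ξ i ω)) μ)
    (hA : ∀ l : ℝ, 0 ≤ l →
      (1 - B * l) * ∑ i, ∫ ω, (ξ i ω) ^ 2 ∂μ
        ≤ ∑ i, ∫ ω, (ξ i ω) ^ 2 * Real.exp (l * ξ i ω) ∂μ) :
    ∀ l : ℝ, 0 ≤ l →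
      max (1 - 2 * B * l) 0 * (∑ i, ∫ ω, (ξ i ω) ^ 2 ∂μ)
        ≤ (∑ i, ((∫ ω, (ξ i ω) ^ 2 * Real.exp (l * ξ i ω) ∂μ) / (∫ ω, Real.exp (l * ξ i ω) ∂μ)
              - (∫ ω, ξ i ω * Real.exp (l * ξ i ω) ∂μ) ^ 2
                / (∫ ω, Real.exp (l * ξ i ω) ∂μ) ^ 2)) ∧
      (∑ i, ((∫ ω, (ξ i ω) ^ 2 * Real.exp (l * ξ i ω) ∂μ) / (∫ ω, Real.exp (l * ξ i ω) ∂μ)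
              - (∫ ω, ξ i ω * Real.exp (l * ξ i ω) ∂μ) ^ 2
                / (∫ ω, Real.exp (l * ξ i ω) ∂μ) ^ 2))
        ≤ Real.exp (B * l) * (∑ i, ∫ ω, (ξ i ω) ^ 2 ∂μ) := by
  intro l hl
  have hvar : ∀ i, ∫ ω, ξ i ω ^ 2 ∂μ ≤ B ^ 2 := fun i =>
    integral_sq_le_sq_of_integral_abs_rpow_le hB.le hδ.1.le (hint2 i)
      (integrable_abs_rpow_of_integrable_pow_three hδ.1.le hδ.2 (hint i).aestronglyMeasurable
        (hint2 i) (integrable_pow_three_of_sum_integral_sq_mul_exp_ge hB.le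
          (fun j => (hint j).aestronglyMeasurable) hbdd hint2 hintx2e hA i))
      (hmom i)
  change max (1 - 2 * B * l) 0 * _ ≤ ∑ i, tiltedVariance μ (ξ i) l
    ∧ ∑ i, tiltedVariance μ (ξ i) l ≤ _
  refine ⟨?_, ?_⟩
  · rcases le_total (1 - 2 * B * l) 0 with h | h
    · rw [max_eq_right h, zero_mul]
      exact Finset.sum_nonneg fun i _ =>
        tiltedVariance_nonneg (hinte i l hl) (hintxe i l hl) (hintx2e i l hl)
    · rw [max_eq_left h]
      exact mul_sum_integral_sq_le_sum_tiltedVariance hB hl (by linarith) hbdd hint hmean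
        (fun i => hinte i l hl) (fun i => hintxe i l hl) hint2 hvar (hA l hl)
  · rw [Finset.mul_sum]
    exact Finset.sum_le_sum fun i _ =>
      tiltedVariance_le hl (hbdd i) (hint i) (hmean i) (hinte i l hl) (hint2 i)

/-- Two-sided bound on the tilted variance under condition (A). -/
theorem tilted_variance_two_sided_bound {Ω : Type*} [MeasurableSpace Ω] (μ : Measure Ω)
    [IsProbabilityMeasure μ] (n : ℕ) (ξ : Fin n → Ω → ℝ) (B δ : ℝ) (hB : 0 < B)
    (hδ : δ ∈ Set.Ioc (0 : ℝ) 1)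
    (hmeas : ∀ i, Measurable (ξ i))
    (hindep : iIndepFun ξ μ)
    (hint : ∀ i, Integrable (ξ i) μ) (hmean : ∀ i, ∫ ω, ξ i ω ∂μ = 0)
    (hbdd : ∀ i, ∀ᵐ ω ∂μ, ξ i ω ≤ B)
    (hmom : ∀ i, ∫ ω, |ξ i ω| ^ (2 + δ) ∂μ ≤ B ^ (2 + δ))
    (hint2 : ∀ i, Integrable (fun ω => (ξ i ω) ^ 2) μ)
    (hinte : ∀ i, ∀ l : ℝ, 0 ≤ l → Integrable (fun ω => Real.exp (l * ξ i ω)) μ)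
    (hintxe : ∀ i, ∀ l : ℝ, 0 ≤ l →
      Integrable (fun ω => ξ i ω * Real.exp (l * ξ i ω)) μ)
    (hintx2e : ∀ i, ∀ l : ℝ, 0 ≤ l →
      Integrable (fun ω => (ξ i ω) ^ 2 * Real.exp (l * ξ i ω)) μ)
    (hA : ∀ l : ℝ, 0 ≤ l →
      (1 - B * l) * ∑ i, ∫ ω, (ξ i ω) ^ 2 ∂μ
        ≤ ∑ i, ∫ ω, (ξ i ω) ^ 2 * Real.exp (l * ξ i ω) ∂μ) :
    ∀ l : ℝ, 0 ≤ l →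
      max (1 - 2 * B * l) 0 * (∑ i, ∫ ω, (ξ i ω) ^ 2 ∂μ)
        ≤ (∑ i, ((∫ ω, (ξ i ω) ^ 2 * Real.exp (l * ξ i ω) ∂μ) / (∫ ω, Real.exp (l * ξ i ω) ∂μ)
              - (∫ ω, ξ i ω * Real.exp (l * ξ i ω) ∂μ) ^ 2
                / (∫ ω, Real.exp (l * ξ i ω) ∂μ) ^ 2)) ∧
      (∑ i, ((∫ ω, (ξ i ω) ^ 2 * Real.exp (l * ξ i ω) ∂μ) / (∫ ω, Real.exp (l * ξ i ω) ∂μ)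
              - (∫ ω, ξ i ω * Real.exp (l * ξ i ω) ∂μ) ^ 2
                / (∫ ω, Real.exp (l * ξ i ω) ∂μ) ^ 2))
        ≤ Real.exp (B * l) * (∑ i, ∫ ω, (ξ i ω) ^ 2 ∂μ) :=
  tilted_variance_two_sided_bound_general μ n ξ B δ hB hδ hint hmean hbdd hmom hint2 hinte hintxe
    hintx2e hA
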